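/- Let G = G₁ * G₂ be a free product of two nontrivial groups. Then the group of outer automorphisms of G that restrict to an inner automorphism on each of G₁ and G₂ (up to conjugacy preserving each factor) is isomorphic to (G₁/Z(G₁)) × (G₂/Z(G₂)), where Z denotes the center. -/

import Mathlib

open Monoid

variable (G₁ G₂ : Type u) [Group G₁] [Group G₂]

/-- The subgroup of `Aut(G₁ ∗ G₂)` consisting of automorphisms whose restriction to each
free factor coincides with the conjugation by some element of `G₁ ∗ G₂`. Its image in
`Out(G₁ ∗ G₂)` is the group `Out(G₁ ∗ G₂, {[G₁], [G₂]}^(t))`. -/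
def conjRestrictingAuts : Subgroup (MulAut (Coprod G₁ G₂)) where
  carrier := {φ | (∃ a, ∀ x : G₁, φ (Coprod.inl x) = a * Coprod.inl x * a⁻¹) ∧
                  (∃ b, ∀ y : G₂, φ (Coprod.inr y) = b * Coprod.inr y * b⁻¹)}
  one_mem' := ⟨⟨1, by simp⟩, ⟨1, by simp⟩⟩
  mul_mem' := by
    rintro φ ψ ⟨⟨a, ha⟩, ⟨b, hb⟩⟩ ⟨⟨a', ha'⟩, ⟨b', hb'⟩⟩
    constructor
    · exact ⟨φ a' * a, fun x => by
        simp only [MulAut.mul_apply, ha' x, map_mul, map_inv, ha x, mul_assoc, mul_inv_rev]⟩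
    · exact ⟨φ b' * b, fun y => by
        simp only [MulAut.mul_apply, hb' y, map_mul, map_inv, hb y, mul_assoc, mul_inv_rev]⟩
  inv_mem' := by
    rintro φ ⟨⟨a, ha⟩, ⟨b, hb⟩⟩
    constructor
    · refine ⟨(φ⁻¹ a)⁻¹, fun x => ?_⟩
      apply φ.injective
      simp only [MulAut.apply_inv_self, map_mul, map_inv, inv_inv, ha x]
      group
    · refine ⟨(φ⁻¹ b)⁻¹, fun y => ?_⟩
      apply φ.injective
      simp only [MulAut.apply_inv_self, map_mul, map_inv, inv_inv, hb y]
      group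

/-- The subgroup of inner automorphisms. -/
def innAuts (G : Type u) [Group G] : Subgroup (MulAut G) := (MulAut.conj (G := G)).range

instance innAuts_normal (G : Type u) [Group G] : (innAuts G).Normal := by
  constructor
  rintro n ⟨g, rfl⟩ φ
  exact ⟨φ g, by ext x; simp [MulAut.conj]⟩


/-!
An automorphism `φ` acting as conjugation by `a` on `G₁` and by `b` on `G₂` becomes, after
composing with conjugation by `a⁻¹`, the automorphism fixing `G₁` pointwise and conjugating `G₂`
by `c = a⁻¹ * b`. Reduced words show that this endomorphism is onto only if `c ∈ G₁ * G₂`: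
removing a first letter from `G₁` or a last letter from `G₂` keeps it onto, and when `c` starts in
`G₂` and ends in `G₁` it maps reduced words letter by letter to reduced words, so it misses the
letters of `G₂`. Hence `(g₁, g₂) ↦ (conjugation by g₁ on G₁, by g₂ on G₂)` maps `G₁ × G₂` onto
the quotient by inner automorphisms. An element that conjugates a nontrivial element of a factor
into that factor lies in the factor, so such an automorphism is inner only when it is conjugation
by an element of `G₁ ∩ G₂ = 1`, and the kernel is `Z(G₁) × Z(G₂)`.
-/

namespace Monoid.CoprodI

variable {ι : Type*} {H : ι → Type*} [∀ i, Group (H i)]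

theorem NeWord.fstIdx_toWord {i j : ι} (u : NeWord H i j) : u.toWord.fstIdx = some i := by
  simp [Word.fstIdx, NeWord.toWord]

theorem NeWord.length_toList_inv {i j : ι} (u : NeWord H i j) :
    u.inv.toList.length = u.toList.length := by
  induction u with
  | singleton => rfl
  | append _ _ _ ih₁ ih₂ =>
    simp only [NeWord.inv, NeWord.toList, List.length_append, ih₁, ih₂, Nat.add_comm]

def conjFactors (g : ∀ i, H i) : CoprodI H →* CoprodI H :=
  lift fun i => of.comp (MulAut.conj (g i)).toMonoidHom

@[simp]
theorem conjFactors_of (g : ∀ i, H i) {i : ι} (x : H i) :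
    conjFactors g (of x) = of (g i * x * (g i)⁻¹) := by
  simp [conjFactors]

variable [DecidableEq ι] [∀ i, DecidableEq (H i)]

theorem NeWord.equiv_prod {i j : ι} (u : NeWord H i j) : Word.equiv u.prod = u.toWord :=
  Word.equiv.apply_symm_apply u.toWord

theorem NeWord.toList_eq_of_prod_eq {i j k l : ι} {u : NeWord H i j} {v : NeWord H k l}
    (h : u.prod = v.prod) : u.toList = v.toList := by
  have := congrArg Word.equiv h
  rw [NeWord.equiv_prod, NeWord.equiv_prod] at this
  exact congrArg Word.toList this

theorem NeWord.prod_ne_one {i j : ι} (u : NeWord H i j) : u.prod ≠ 1 := by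
  intro h
  have := congrArg Word.equiv h
  rw [NeWord.equiv_prod,
    show Word.equiv (1 : CoprodI H) = Word.empty from one_smul (CoprodI H) _] at this
  exact u.toList_ne_nil (congrArg Word.toList this)

theorem NeWord.prod_ne_of {i j k : ι} (u : NeWord H i j) (hu : 2 ≤ u.toList.length) (z : H k) :
    u.prod ≠ of z := by
  intro h
  by_cases hz : z = 1
  · exact u.prod_ne_one (by rw [h, hz, map_one])
  · have := NeWord.toList_eq_of_prod_eq (h.trans (NeWord.prod_singleton z hz).symm)
    simp [this] at hu

theorem NeWord.exists_prod_eq {g : CoprodI H} (hg : g ≠ 1) :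
    ∃ (i j : ι) (v : NeWord H i j), v.prod = g := by
  have : Word.equiv g ≠ Word.empty := fun h => hg (by rw [← Word.equiv.symm_apply_apply g, h]; rfl)
  obtain ⟨i, j, v, hv⟩ := NeWord.of_word _ this
  exact ⟨i, j, v, by rw [NeWord.prod, hv]; exact Word.equiv.symm_apply_apply g⟩

theorem exists_of_mul_prod_word (w : CoprodI H) (i : ι) :
    ∃ (h : H i) (t : Word H), t.fstIdx ≠ some i ∧ w = of h * t.prod := by
  let p := Word.equivPair i (Word.equiv w)
  refine ⟨p.head, p.tail, p.fstIdx_ne, ?_⟩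
  rw [← Word.prod_rcons, ← Word.equivPair_symm, Equiv.symm_apply_apply]
  exact (Word.equiv.symm_apply_apply w).symm

def wordLength (w : CoprodI H) : ℕ := (Word.equiv w).toList.length

theorem wordLength_prod (w : Word H) : wordLength w.prod = w.toList.length := by
  rw [wordLength, show w.prod = Word.equiv.symm w from rfl, Equiv.apply_symm_apply]

theorem wordLength_of_mul_prod {i : ι} {h : H i} (hh : h ≠ 1) {t : Word H}
    (ht : t.fstIdx ≠ some i) : wordLength (of h * t.prod) = t.toList.length + 1 := by
  rw [← Word.prod_cons i h t hh ht, wordLength_prod]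
  rfl

theorem wordLength_inv (w : CoprodI H) : wordLength w⁻¹ = wordLength w := by
  by_cases hw : w = 1
  · rw [hw, inv_one]
  obtain ⟨i, j, u, rfl⟩ := NeWord.exists_prod_eq hw
  rw [← NeWord.inv_prod, wordLength, wordLength, NeWord.equiv_prod, NeWord.equiv_prod]
  exact u.length_toList_inv

theorem exists_eq_of_of_conj_eq_of {i k : ι} {x : H i} (hx : x ≠ 1) {w : CoprodI H} {z : H k}
    (h : w * of x * w⁻¹ = of z) : ∃ u : H i, w = of u := by
  obtain ⟨u, t, ht, hw⟩ := exists_of_mul_prod_word w⁻¹ i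
  rw [inv_eq_iff_eq_inv] at hw
  by_cases ht0 : t = Word.empty
  · exact ⟨u⁻¹, by simp [hw, ht0]⟩
  exfalso
  obtain ⟨a, b, v, rfl⟩ := NeWord.of_word t ht0
  have hai : a ≠ i := fun hai => ht (hai ▸ v.fstIdx_toWord)
  have hy : u⁻¹ * x * u ≠ 1 := by rwa [ne_eq, mul_assoc, inv_mul_eq_one, eq_comm, mul_eq_right]
  refine ((v.inv.append hai (.singleton _ hy)).append hai.symm v).prod_ne_of ?_ z ?_
  · have := v.toList_ne_nil
    have := v.inv.toList_ne_nil
    simp only [NeWord.toList, List.length_append, List.length_singleton]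
    grind [List.length_pos_iff]
  · rw [← h, hw]
    simp only [NeWord.append_prod, NeWord.prod_singleton, NeWord.inv_prod, map_mul, map_inv]
    simp only [NeWord.prod, mul_inv_rev, inv_inv]
    group

section Twist

variable {H : Bool → Type*} [∀ b, Group (H b)]

def twist (c : CoprodI H) : CoprodI H →* CoprodI H :=
  lift fun b => Bool.rec ((MulAut.conj c).toMonoidHom.comp of) of b

@[simp]
theorem twist_of_true (c : CoprodI H) (x : H true) : twist c (of x) = of x := by
  simp [twist]

@[simp]
theorem twist_of_false (c : CoprodI H) (y : H false) : twist c (of y) = c * of y * c⁻¹ := by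
  simp [twist]

theorem twist_of_mul (h : H true) (t : CoprodI H) :
    twist (of h * t) = (MulAut.conj (of h)).toMonoidHom.comp
      ((twist t).comp (conjFactors (Pi.mulSingle true h⁻¹))) := by
  ext b x
  cases b <;> simp <;> group

theorem twist_mul_of (t : CoprodI H) (k : H false) :
    twist (t * of k) = (twist t).comp (conjFactors (Pi.mulSingle false k)) := by
  ext b x
  cases b <;> simp [mul_assoc]

/-- `twist u.prod` computed letter by letter on reduced words: the result is again reduced because
`u` begins in `H false` and ends in `H true`. -/
def NeWord.twist (u : NeWord H false true) : ∀ {a b : Bool}, NeWord H a b → NeWord H a b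
  | _, _, .singleton (i := true) x hx => .singleton x hx
  | _, _, .singleton (i := false) y hy => ((u.append (by decide) (.singleton y hy)).append
      (by decide) u.inv)
  | _, _, .append v₁ hne v₂ => (u.twist v₁).append hne (u.twist v₂)

theorem NeWord.prod_twist (u : NeWord H false true) {a b : Bool} (v : NeWord H a b) :
    (u.twist v).prod = CoprodI.twist u.prod v.prod := by
  induction v with
  | singleton x hx =>
    rename_i i
    cases i <;> simp [NeWord.twist, NeWord.append_prod]
  | append v₁ hne v₂ ih₁ ih₂ => simp [NeWord.twist, NeWord.append_prod, ih₁, ih₂]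

theorem NeWord.two_le_length_twist (u : NeWord H false true) {a b : Bool} (v : NeWord H a b)
    (ha : a = false) : 2 ≤ (u.twist v).toList.length := by
  induction v with
  | singleton x hx =>
    subst ha
    have := u.toList_ne_nil
    simp only [NeWord.twist, NeWord.toList, List.length_append, List.length_singleton]
    grind [List.length_pos_iff]
  | append v₁ _ _ ih₁ _ =>
    simp only [NeWord.twist, NeWord.toList, List.length_append]
    grind

variable [∀ b, DecidableEq (H b)]

theorem twist_apply_ne_of (u : NeWord H false true) {y : H false} (hy : y ≠ 1) (g : CoprodI H) :
    twist u.prod g ≠ of y := by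
  intro h
  have hg : g ≠ 1 := by
    rintro rfl
    exact (NeWord.singleton y hy).prod_ne_one (by simpa using h.symm)
  obtain ⟨a, b, v, rfl⟩ := NeWord.exists_prod_eq hg
  have hl := NeWord.toList_eq_of_prod_eq
    (((u.prod_twist v).trans h).trans (NeWord.prod_singleton y hy).symm)
  have ha : a = false := by
    simpa [hl] using congrArg (Option.map Sigma.fst) (u.twist v).toList_head?
  simpa [hl] using u.two_le_length_twist v ha

theorem eq_one_or_exists_neWord_of_fstIdx {t s : Word H} (ht : t.fstIdx ≠ some true)
    (hs : s.fstIdx ≠ some false) (h : t.prod⁻¹ = s.prod) :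
    t.prod = 1 ∨ ∃ v : NeWord H false true, v.prod = t.prod := by
  by_cases ht0 : t = Word.empty
  · simp [ht0]
  right
  obtain ⟨a, b, v, rfl⟩ := NeWord.of_word t ht0
  have hvs : v.inv.toWord = s := by
    rw [← NeWord.equiv_prod, NeWord.inv_prod, NeWord.prod, h]
    exact Word.equiv.apply_symm_apply s
  obtain rfl : a = false := by simpa [v.fstIdx_toWord] using ht
  obtain rfl : b = true := by simpa [← hvs, v.inv.fstIdx_toWord] using hs
  exact ⟨v, rfl⟩

theorem exists_eq_of_mul_of_of_surjective_twist {y₀ : H false} (hy₀ : y₀ ≠ 1) (c : CoprodI H)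
    (hc : Function.Surjective (twist c)) : ∃ (g₁ : H true) (g₂ : H false), c = of g₁ * of g₂ := by
  induction hn : wordLength c using Nat.strong_induction_on generalizing c with
  | _ n ih =>
  obtain ⟨h, t, ht, rfl⟩ := exists_of_mul_prod_word c true
  by_cases hh : h ≠ 1
  · rw [twist_of_mul, MonoidHom.coe_comp, MonoidHom.coe_comp] at hc
    have hlen : wordLength t.prod < n := by
      rw [← hn, wordLength_of_mul_prod hh ht, wordLength_prod]; omega
    obtain ⟨g₁, g₂, e⟩ := ih _ hlen _ ((hc.of_comp_left (MulAut.conj _).injective).of_comp) rfl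
    exact ⟨h * g₁, g₂, by rw [e, map_mul, mul_assoc]⟩
  rw [not_not.mp hh, map_one, one_mul] at hc hn ⊢
  obtain ⟨k, s, hs, hts⟩ := exists_of_mul_prod_word t.prod⁻¹ false
  by_cases hk : k ≠ 1
  · have hts' : t.prod = s.prod⁻¹ * of k⁻¹ := by rw [← inv_inv t.prod, hts]; simp
    rw [hts', twist_mul_of, MonoidHom.coe_comp] at hc
    have hlen : wordLength s.prod⁻¹ < n := by
      rw [← hn, wordLength_inv, ← wordLength_inv t.prod, hts, wordLength_of_mul_prod hk hs,
        wordLength_prod]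
      omega
    obtain ⟨g₁, g₂, e⟩ := ih _ hlen _ hc.of_comp rfl
    exact ⟨g₁, g₂ * k⁻¹, by rw [hts', e, map_mul, mul_assoc]⟩
  rw [not_not.mp hk, map_one, one_mul] at hts
  obtain h1 | ⟨v, hv⟩ := eq_one_or_exists_neWord_of_fstIdx ht hs hts
  · exact ⟨1, 1, by simp [h1]⟩
  · obtain ⟨g, hg⟩ := hc (of y₀)
    exact absurd hg (hv ▸ twist_apply_ne_of v hy₀ g)

end Twist
end Monoid.CoprodI

namespace Monoid.Coprod

variable {G₁ G₂}

instance instGroupCond (b : Bool) : Group (cond b G₁ G₂) := by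
  cases b <;> assumption

def toCoprodI : G₁ ∗ G₂ ≃* CoprodI fun b => cond b G₁ G₂ :=
  MonoidHom.toMulEquiv
    (lift (CoprodI.of (M := fun b => cond b G₁ G₂) (i := true))
      (CoprodI.of (M := fun b => cond b G₁ G₂) (i := false)))
    (CoprodI.lift fun b => Bool.rec inr inl b)
    (by ext <;> simp) (by ext b x; cases b <;> simp)

@[simp]
theorem toCoprodI_inl (x : G₁) :
    toCoprodI (inl x : G₁ ∗ G₂) = CoprodI.of (M := fun b => cond b G₁ G₂) (i := true) x := by
  simp [toCoprodI]

@[simp]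
theorem toCoprodI_inr (y : G₂) :
    toCoprodI (inr y : G₁ ∗ G₂) = CoprodI.of (M := fun b => cond b G₁ G₂) (i := false) y := by
  simp [toCoprodI]

@[simp]
theorem toCoprodI_symm_of_true (x : G₁) :
    toCoprodI.symm (CoprodI.of (M := fun b => cond b G₁ G₂) (i := true) x) =
      (inl x : G₁ ∗ G₂) := by
  rw [MulEquiv.symm_apply_eq, toCoprodI_inl]

@[simp]
theorem toCoprodI_symm_of_false (y : G₂) :
    toCoprodI.symm (CoprodI.of (M := fun b => cond b G₁ G₂) (i := false) y) =
      (inr y : G₁ ∗ G₂) := by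
  rw [MulEquiv.symm_apply_eq, toCoprodI_inr]

theorem exists_eq_inl_of_conj_inl_eq_inl {x : G₁} (hx : x ≠ 1) {w : G₁ ∗ G₂} {z : G₁}
    (h : w * inl x * w⁻¹ = inl z) : ∃ u, w = inl u := by
  classical
  obtain ⟨u, hu⟩ := CoprodI.exists_eq_of_of_conj_eq_of (i := true) (k := true) hx
    (w := toCoprodI w) (z := z) (by simpa using congrArg toCoprodI h)
  exact ⟨u, toCoprodI.injective (by simpa using hu)⟩

theorem exists_eq_inr_of_conj_inr_eq_inr {y : G₂} (hy : y ≠ 1) {w : G₁ ∗ G₂} {z : G₂}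
    (h : w * inr y * w⁻¹ = inr z) : ∃ u, w = inr u := by
  classical
  obtain ⟨u, hu⟩ := CoprodI.exists_eq_of_of_conj_eq_of (i := false) (k := false) hy
    (w := toCoprodI w) (z := z) (by simpa using congrArg toCoprodI h)
  exact ⟨u, toCoprodI.injective (by simpa using hu)⟩

theorem exists_eq_inl_mul_inr_of_conj [Nontrivial G₂] {ψ : MulAut (G₁ ∗ G₂)} {c : G₁ ∗ G₂}
    (h₁ : ∀ x, ψ (inl x) = inl x) (h₂ : ∀ y, ψ (inr y) = c * inr y * c⁻¹) :
    ∃ g₁ g₂, c = inl g₁ * inr g₂ := by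
  classical
  obtain ⟨y₀, hy₀⟩ := exists_ne (1 : G₂)
  have hψ : CoprodI.twist (toCoprodI c) =
      (toCoprodI.toMonoidHom.comp ψ.toMonoidHom).comp toCoprodI.symm.toMonoidHom := by
    ext b x
    cases b
    · simp [h₂, toCoprodI_symm_of_false x]
    · simp [h₁, toCoprodI_symm_of_true x]
  have hs : Function.Surjective (CoprodI.twist (toCoprodI c)) := by
    rw [hψ]
    exact (toCoprodI.surjective.comp ψ.surjective).comp toCoprodI.symm.surjective
  obtain ⟨g₁, g₂, e⟩ := CoprodI.exists_eq_of_mul_of_of_surjective_twist hy₀ _ hs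
  exact ⟨g₁, g₂, toCoprodI.injective (by simpa using e)⟩

def conjFactors : G₁ × G₂ →* MulAut (G₁ ∗ G₂) where
  toFun p := MulEquiv.coprodCongr (MulAut.conj p.1) (MulAut.conj p.2)
  map_one' := by ext z; induction z using Coprod.induction_on <;> simp_all
  map_mul' p q := by ext z; induction z using Coprod.induction_on <;> simp_all [mul_assoc]

@[simp]
theorem conjFactors_inl (p : G₁ × G₂) (x : G₁) :
    conjFactors p (inl x) = inl (p.1 * x * p.1⁻¹) := rfl

@[simp]
theorem conjFactors_inr (p : G₁ × G₂) (y : G₂) :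
    conjFactors p (inr y) = inr (p.2 * y * p.2⁻¹) := rfl

theorem conjFactors_mem_conjRestrictingAuts (p : G₁ × G₂) :
    conjFactors p ∈ conjRestrictingAuts G₁ G₂ :=
  ⟨⟨inl p.1, by simp⟩, ⟨inr p.2, by simp⟩⟩

theorem conjFactors_eq_one_iff {p : G₁ × G₂} :
    conjFactors p = 1 ↔ p ∈ (Subgroup.center G₁).prod (Subgroup.center G₂) := by
  simp only [Subgroup.mem_prod, Subgroup.mem_center_iff]
  constructor
  · intro h
    have h₁ := fun x => DFunLike.congr_fun h (inl x)
    have h₂ := fun y => DFunLike.congr_fun h (inr y)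
    simp only [conjFactors_inl, conjFactors_inr, MulAut.one_apply, inl_injective.eq_iff,
      inr_injective.eq_iff, mul_inv_eq_iff_eq_mul] at h₁ h₂
    exact ⟨fun x => (h₁ x).symm, fun y => (h₂ y).symm⟩
  · rintro ⟨h₁, h₂⟩
    ext z
    induction z using Coprod.induction_on with
    | inl x => simp [← h₁ x]
    | inr y => simp [← h₂ y]
    | mul z₁ z₂ hz₁ hz₂ => rw [map_mul, map_mul, hz₁, hz₂]

theorem eq_one_of_conj_eq_conjFactors [Nontrivial G₁] [Nontrivial G₂] {w : G₁ ∗ G₂}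
    {p : G₁ × G₂} (h : MulAut.conj w = conjFactors p) : w = 1 := by
  obtain ⟨x, hx⟩ := exists_ne (1 : G₁)
  obtain ⟨y, hy⟩ := exists_ne (1 : G₂)
  obtain ⟨u, rfl⟩ := exists_eq_inl_of_conj_inl_eq_inl hx
    (by rw [← MulAut.conj_apply, h, conjFactors_inl])
  obtain ⟨v, hv⟩ := exists_eq_inr_of_conj_inr_eq_inr hy
    (by rw [← MulAut.conj_apply, h, conjFactors_inr])
  have hu : u = 1 := by simpa using congrArg fst hv
  rw [hu, map_one]

theorem exists_conj_mul_conjFactors_eq [Nontrivial G₂] {φ : MulAut (G₁ ∗ G₂)}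
    (hφ : φ ∈ conjRestrictingAuts G₁ G₂) : ∃ w p, MulAut.conj w * conjFactors p = φ := by
  obtain ⟨⟨a, ha⟩, ⟨b, hb⟩⟩ := hφ
  obtain ⟨g₁, g₂, hc⟩ := exists_eq_inl_mul_inr_of_conj (ψ := (MulAut.conj a)⁻¹ * φ) (c := a⁻¹ * b)
    (fun x => by simp [ha, mul_assoc]) (fun y => by simp [hb, mul_assoc])
  refine ⟨a * inl g₁, (g₁⁻¹, g₂), ?_⟩
  rw [inv_mul_eq_iff_eq_mul] at hc
  refine MulEquiv.toMonoidHom_injective (Coprod.hom_ext ?_ ?_) <;> ext <;>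
    simp [ha, hb, hc, mul_assoc]

theorem conjFactors_mem_innAuts_iff [Nontrivial G₁] [Nontrivial G₂] {p : G₁ × G₂} :
    conjFactors p ∈ innAuts (G₁ ∗ G₂) ↔ p ∈ (Subgroup.center G₁).prod (Subgroup.center G₂) := by
  rw [← conjFactors_eq_one_iff]
  constructor
  · rintro ⟨w, hw⟩
    rw [← hw, eq_one_of_conj_eq_conjFactors hw, map_one]
  · intro h
    exact h ▸ one_mem _

def conjFactorsOut :
    G₁ × G₂ →* conjRestrictingAuts G₁ G₂ ⧸
      (innAuts (G₁ ∗ G₂)).subgroupOf (conjRestrictingAuts G₁ G₂) :=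
  (QuotientGroup.mk' _).comp (conjFactors.codRestrict _ conjFactors_mem_conjRestrictingAuts)

theorem conjFactorsOut_surjective [Nontrivial G₂] :
    Function.Surjective (conjFactorsOut : G₁ × G₂ →* _) := by
  intro q
  obtain ⟨⟨φ, hφ⟩, rfl⟩ := QuotientGroup.mk'_surjective _ q
  obtain ⟨w, p, rfl⟩ := exists_conj_mul_conjFactors_eq hφ
  refine ⟨p, QuotientGroup.eq_iff_div_mem.2 ?_⟩
  rw [Subgroup.mem_subgroupOf, Subgroup.coe_div, MonoidHom.codRestrict_apply, div_eq_mul_inv,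
    mul_inv_rev, mul_inv_cancel_left]
  exact ⟨w⁻¹, map_inv _ _⟩

theorem ker_conjFactorsOut [Nontrivial G₁] [Nontrivial G₂] :
    (conjFactorsOut : G₁ × G₂ →* _).ker = (Subgroup.center G₁).prod (Subgroup.center G₂) := by
  ext p
  rw [MonoidHom.mem_ker, conjFactorsOut, MonoidHom.comp_apply, QuotientGroup.mk'_apply,
    QuotientGroup.eq_one_iff, Subgroup.mem_subgroupOf, MonoidHom.codRestrict_apply,
    conjFactors_mem_innAuts_iff]

end Monoid.Coprod

/-- For a free product `G = G₁ ∗ G₂` of two nontrivial groups, the group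
`Out(G, {[G₁],[G₂]}^(t))` of outer automorphisms acting as an inner automorphism on each
factor is isomorphic to `(G₁/Z(G₁)) × (G₂/Z(G₂))`. -/
theorem out_t_free_product_two_factors [Nontrivial G₁] [Nontrivial G₂] :
    Nonempty
      ((conjRestrictingAuts G₁ G₂ ⧸
          (innAuts (Coprod G₁ G₂)).subgroupOf (conjRestrictingAuts G₁ G₂)) ≃*
        (G₁ ⧸ Subgroup.center G₁) × (G₂ ⧸ Subgroup.center G₂)) :=
  ⟨(QuotientGroup.quotientKerEquivOfSurjective _ Coprod.conjFactorsOut_surjective).symm.trans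
    ((QuotientGroup.quotientMulEquivOfEq Coprod.ker_conjFactorsOut).trans
      (QuotientGroup.prodMulEquiv _ _))⟩
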